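/- Let ρ be a density matrix on ℋ_A ⊗ ℋ_B (both finite-dimensional complex Hilbert spaces). If there exist a finite family of POVMs {E^j_a}_a on ℋ_A and m POVMs {F^i_b}_b (i = 1,...,m) on ℋ_B whose joint statistics on ρ admit no local hidden variable model (i.e. there do not exist a finite set Λ, a probability distribution p on Λ, and response functions P_A(a|j,λ), P_B(b|i,λ) as in Theorem 1 with Tr(ρ(E^j_a ⊗ F^i_b)) = Σ_λ p(λ) P_A(a|j,λ) P_B(b|i,λ) for all j,i,a,b), then ρ has no symmetric extension to m copies of B: there is no density matrix ρ' on ℋ_A ⊗ ℋ_B^{⊗m} whose reduced density matrix on ℋ_A ⊗ ℋ_{B_i} equals ρ for every i = 1,...,m. -/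

import Mathlib

/-!
Given a symmetric extension `ρ'`, let Bob measure all `m` POVMs at once, one on each copy of `B`,
i.e. measure the product POVM `⨂ i, F i (λ i)`. The tuple `λ` of his outcomes serves as the hidden
variable: `p λ` is its probability, Alice's response is the distribution of her outcome
conditioned on `λ`, and Bob's response to setting `i` is deterministically `λ i`. Summing out all
of Bob's outcomes but the `i`-th turns the product POVM into `F i b` on the `i`-th copy, whose
statistics are those of `reducedAt ρ' i = ρ`; so `ρ` would admit a local hidden variable model.
-/

open Matrix
open scoped Kronecker ComplexConjugate ComplexOrder

/-- A density matrix: positive semidefinite with trace 1. -/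
def IsDensityMatrix {n : Type*} [Fintype n] [DecidableEq n] (ρ : Matrix n n ℂ) : Prop :=
  ρ.PosSemidef ∧ ρ.trace = 1

/-- A POVM: a finite family of positive semidefinite operators summing to the identity. -/
def IsPOVM {n O : Type*} [Fintype n] [DecidableEq n] [Fintype O]
    (E : O → Matrix n n ℂ) : Prop :=
  (∀ a, (E a).PosSemidef) ∧ ∑ a, E a = 1

/-- The reduced density matrix of a state on `ℋ_A ⊗ ℋ_B^{⊗m}` on the factors `ℋ_A ⊗ ℋ_{B_i}`,
obtained by tracing out all the other `B` factors. -/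
noncomputable def reducedAt {dA dB m : ℕ}
    (ρ' : Matrix (Fin dA × (Fin m → Fin dB)) (Fin dA × (Fin m → Fin dB)) ℂ)
    (i : Fin m) : Matrix (Fin dA × Fin dB) (Fin dA × Fin dB) ℂ :=
  Matrix.of fun p q => ∑ g : Fin m → Fin dB,
    if g i = p.2 then ρ' (p.1, g) (q.1, Function.update g i q.2) else 0

namespace Matrix

open Finset

lemma kronecker_sum {l m n p κ α : Type*} [CommSemiring α] (A : Matrix l m α)
    (B : κ → Matrix n p α) (s : Finset κ) : A ⊗ₖ ∑ x ∈ s, B x = ∑ x ∈ s, A ⊗ₖ B x :=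
  map_sum (kroneckerBilinear (R := α) A) B s

lemma sum_kronecker {l m n p κ α : Type*} [CommSemiring α] (A : κ → Matrix l m α)
    (B : Matrix n p α) (s : Finset κ) : (∑ x ∈ s, A x) ⊗ₖ B = ∑ x ∈ s, A x ⊗ₖ B :=
  map_sum ((kroneckerBilinear (R := α)).flip B) A s

lemma PosSemidef.trace_mul_nonneg {𝕜 n : Type*} [RCLike 𝕜] [Fintype n] {A B : Matrix n n 𝕜}
    (hA : A.PosSemidef) (hB : B.PosSemidef) : 0 ≤ (A * B).trace := by
  classical
  open MatrixOrder in
  obtain ⟨C, rfl⟩ := CStarAlgebra.nonneg_iff_eq_star_mul_self.mp hB.nonneg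
  rw [star_eq_conjTranspose, ← Matrix.mul_assoc, trace_mul_cycle]
  exact (hA.mul_mul_conjTranspose_same C).trace_nonneg

/-- The Kronecker product `⨂ i, A i`, with the basis of the tensor power indexed by `ι → d`. -/
def piKronecker {ι d R : Type*} [Fintype ι] [CommMonoid R] (A : ι → Matrix d d R) :
    Matrix (ι → d) (ι → d) R :=
  of fun g h => ∏ i, A i (g i) (h i)

section piKronecker

variable {ι d O R : Type*} [Fintype ι]

lemma piKronecker_apply [CommMonoid R] (A : ι → Matrix d d R) (g h : ι → d) :
    piKronecker A g h = ∏ i, A i (g i) (h i) := rfl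

/-- `piKronecker A` is the Hadamard product of the matrices `(g, h) ↦ A i (g i) (h i)`, each
positive semidefinite, so this is Schur's product theorem. -/
lemma PosSemidef.piKronecker {𝕜 : Type*} [RCLike 𝕜] [Finite d] {A : ι → Matrix d d 𝕜}
    (hA : ∀ i, (A i).PosSemidef) : (piKronecker A).PosSemidef := by
  classical
  suffices ∀ s : Finset ι, (of fun g h : ι → d => ∏ i ∈ s, A i (g i) (h i)).PosSemidef from
    this univ
  intro s
  induction s using Finset.induction_on with
  | empty =>
    convert posSemidef_vecMulVec_self_star (1 : (ι → d) → 𝕜) using 1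
    ext g h
    simp [vecMulVec_apply]
  | insert i s hi ih =>
    convert ((hA i).submatrix fun g : ι → d => g i).hadamard ih using 1
    ext g h
    simp [prod_insert hi]

lemma piKronecker_eq_zero [CommMonoidWithZero R] {A : ι → Matrix d d R} {i : ι} (hi : A i = 0) :
    piKronecker A = 0 := by
  ext g h
  exact prod_eq_zero (mem_univ i) (by simp [hi])

lemma piKronecker_one [CommMonoidWithZero R] [DecidableEq d] :
    piKronecker (1 : ι → Matrix d d R) = 1 := by
  ext g h
  simp [piKronecker_apply, one_apply, prod_boole, funext_iff]

lemma piKronecker_sum [DecidableEq ι] [Fintype O] [CommSemiring R] (F : ι → O → Matrix d d R) :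
    piKronecker (fun i => ∑ b, F i b) = ∑ bv : ι → O, piKronecker fun i => F i (bv i) := by
  ext g h
  simp [piKronecker_apply, sum_apply, Fintype.prod_sum]

lemma sum_filter_piKronecker [DecidableEq ι] [Fintype O] [DecidableEq O] [CommSemiring R]
    (F : ι → O → Matrix d d R) (i : ι) (b : O) :
    ∑ bv : ι → O with bv i = b, piKronecker (fun k => F k (bv k)) =
      piKronecker (Function.update (fun k => ∑ c, F k c) i (F i b)) := by
  set F' := Function.update F i (Pi.single b (F i b))
  have hF' : Function.update (fun k => ∑ c, F k c) i (F i b) = fun k => ∑ c, F' k c := by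
    funext k
    by_cases hk : k = i
    · subst hk; simp [F']
    · simp [F', hk]
  rw [hF', piKronecker_sum, sum_filter]
  refine sum_congr rfl fun bv _ => ?_
  split_ifs with hb
  · congr 1; funext k
    by_cases hk : k = i
    · subst hk; simp [F', hb]
    · simp [F', hk]
  · exact (piKronecker_eq_zero (i := i) (by simp [F', hb])).symm

lemma piKronecker_update_one_apply [DecidableEq ι] [CommSemiring R] [DecidableEq d]
    (i : ι) (B : Matrix d d R) (g h : ι → d) :
    piKronecker (Function.update 1 i B) g h = if ∀ k ≠ i, g k = h k then B (g i) (h i) else 0 := by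
  rw [piKronecker_apply, Fintype.prod_eq_mul_prod_compl i]
  have : ∏ k ∈ {i}ᶜ, Function.update (1 : ι → Matrix d d R) i B k (g k) (h k) =
      if ∀ k ≠ i, g k = h k then 1 else 0 := by
    rw [prod_congr rfl fun k hk => by
      rw [Function.update_of_ne (by simpa using hk), Pi.one_apply, one_apply], prod_boole]
    simp
  rw [this, Function.update_self, mul_ite, mul_one, mul_zero]

end piKronecker

end Matrix

open Finset

lemma Fintype.sum_comp_update {ι d M : Type*} [Fintype ι] [DecidableEq ι] [Fintype d]
    [DecidableEq d] [AddCommMonoid M] (f : (ι → d) → M) (g : ι → d) (i : ι) :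
    ∑ v, f (Function.update g i v) = ∑ h, if ∀ k ≠ i, h k = g k then f h else 0 := by
  rw [← sum_filter, ← sum_image fun _ _ _ _ h => Function.update_injective g i h]
  congr 1
  ext h
  simp only [mem_image, mem_filter, mem_univ, true_and, Function.update_eq_iff, exists_eq_left]
  exact forall₂_congr fun _ _ => eq_comm

lemma trace_reducedAt_mul_kronecker {dA dB m : ℕ}
    (ρ' : Matrix (Fin dA × (Fin m → Fin dB)) (Fin dA × (Fin m → Fin dB)) ℂ) (i : Fin m)
    (A : Matrix (Fin dA) (Fin dA) ℂ) (B : Matrix (Fin dB) (Fin dB) ℂ) :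
    (reducedAt ρ' i * (A ⊗ₖ B)).trace =
      (ρ' * (A ⊗ₖ piKronecker (Function.update 1 i B))).trace := by
  have lhs : (reducedAt ρ' i * (A ⊗ₖ B)).trace = ∑ α, ∑ β, ∑ v, ∑ g : Fin m → Fin dB,
      ρ' (α, g) (β, Function.update g i v) * (A β α * B v (g i)) := by
    simp only [trace, Matrix.diag, mul_apply, Fintype.sum_prod_type, reducedAt, of_apply,
      kronecker_apply, sum_mul, ite_mul, zero_mul]
    refine sum_congr rfl fun α _ => ?_
    rw [sum_comm]
    refine sum_congr rfl fun β _ => ?_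
    rw [sum_comm]
    refine sum_congr rfl fun v _ => ?_
    rw [sum_comm]
    simp
  have rhs : (ρ' * (A ⊗ₖ piKronecker (Function.update 1 i B))).trace =
      ∑ α, ∑ g : Fin m → Fin dB, ∑ β, ∑ v,
        ρ' (α, g) (β, Function.update g i v) * (A β α * B v (g i)) := by
    simp only [trace, Matrix.diag, mul_apply, Fintype.sum_prod_type, kronecker_apply,
      piKronecker_update_one_apply, mul_ite, mul_zero]
    refine sum_congr rfl fun α _ => sum_congr rfl fun g _ => sum_congr rfl fun β _ => ?_
    convert (Fintype.sum_comp_update (fun h => ρ' (α, g) (β, h) * (A β α * B (h i) (g i))) g i).symm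
      using 3
    simp only [Function.update_self]
  rw [lhs, rhs]
  refine sum_congr rfl fun α _ => ?_
  conv_rhs => rw [sum_comm]
  exact sum_congr rfl fun β _ => sum_comm

lemma exists_mem_stdSimplex_smul_eq {O : Type*} [Fintype O] [Nonempty O] {q : O → ℝ}
    (hq : 0 ≤ q) : ∃ P ∈ stdSimplex ℝ O, (∑ a, q a) • P = q := by
  by_cases h0 : ∑ a, q a = 0
  · refine ⟨fun _ => (Fintype.card O : ℝ)⁻¹, ⟨fun _ => by positivity, by simp⟩, ?_⟩
    rw [h0, zero_smul]
    exact ((Fintype.sum_eq_zero_iff_of_nonneg hq).mp h0).symm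
  · refine ⟨(∑ a, q a)⁻¹ • q, ⟨fun a => ?_, ?_⟩, smul_inv_smul₀ h0 q⟩
    · have := sum_nonneg fun a (_ : a ∈ univ) => hq a
      exact mul_nonneg (inv_nonneg.mpr this) (hq a)
    · simp [← mul_sum, inv_mul_cancel₀ h0]

section LocalHiddenVariables

variable {Λ J I OA OB : Type*} [Fintype Λ] [Fintype OA] [Fintype OB]

def IsLHVModel (P : J → I → OA → OB → ℂ) (p : Λ → ℝ) (PA : J → OA → Λ → ℝ)
    (PB : I → OB → Λ → ℝ) : Prop :=
  (∀ l, 0 ≤ p l) ∧ (∑ l, p l = 1) ∧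
  (∀ j a l, 0 ≤ PA j a l ∧ PA j a l ≤ 1) ∧
  (∀ j l, ∑ a, PA j a l = 1) ∧
  (∀ i b l, 0 ≤ PB i b l ∧ PB i b l ≤ 1) ∧
  (∀ i l, ∑ b, PB i b l = 1) ∧
  (∀ j i a b, P j i a b = ((∑ l, p l * PA j a l * PB i b l : ℝ) : ℂ))

lemma IsLHVModel.comp_equiv {Λ' : Type*} [Fintype Λ'] {P : J → I → OA → OB → ℂ} {p : Λ → ℝ}
    {PA : J → OA → Λ → ℝ} {PB : I → OB → Λ → ℝ} (h : IsLHVModel P p PA PB) (e : Λ' ≃ Λ) :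
    IsLHVModel P (p ∘ e) (fun j a => PA j a ∘ e) (fun i b => PB i b ∘ e) := by
  obtain ⟨hp, hp_sum, hPA, hPA_sum, hPB, hPB_sum, hP⟩ := h
  refine ⟨fun l => hp (e l), ?_, fun j a l => hPA j a (e l), fun j l => hPA_sum j (e l),
    fun i b l => hPB i b (e l), fun i l => hPB_sum i (e l), fun j i a b => ?_⟩
  · simpa only [Function.comp_apply, e.sum_comp] using hp_sum
  · simpa only [Function.comp_apply, e.sum_comp (fun l => p l * PA j a l * PB i b l)] using
      hP j i a b

lemma exists_isLHVModel_of_deterministic [DecidableEq OB] {q : J → OA → Λ → ℝ}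
    (hq : ∀ j a l, 0 ≤ q j a l) {p : Λ → ℝ} (hp : ∀ l, 0 ≤ p l) (hp_sum : ∑ l, p l = 1)
    (hqp : ∀ j l, ∑ a, q j a l = p l) (β : I → Λ → OB) {P : J → I → OA → OB → ℂ}
    (hP : ∀ j i a b, P j i a b = ((∑ l with β i l = b, q j a l : ℝ) : ℂ)) :
    ∃ PA, IsLHVModel P p PA fun i b l => if β i l = b then 1 else 0 := by
  -- an empty `OA` would force `p = 0`
  have hOA : J → Nonempty OA := fun j => by
    by_contra h
    rw [not_nonempty_iff] at h
    simp [← hqp j] at hp_sum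
  choose PA hPA using fun j l => haveI := hOA j; exists_mem_stdSimplex_smul_eq fun a => hq j a l
  refine ⟨fun j a l => PA j l a, hp, hp_sum, fun j a l => mem_Icc_of_mem_stdSimplex (hPA j l).1 a,
    fun j l => (hPA j l).1.2, fun i b l => mem_Icc_of_mem_stdSimplex (ite_eq_mem_stdSimplex ℝ _) b,
    fun i l => (ite_eq_mem_stdSimplex ℝ (β i l)).2, fun j i a b => ?_⟩
  rw [hP, sum_filter]
  congr 1
  refine sum_congr rfl fun l _ => ?_
  rw [mul_ite, mul_one, mul_zero, ← hqp j l, ← congrFun (hPA j l).2 a]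
  rfl

end LocalHiddenVariables

theorem exists_isLHVModel_reducedAt {dA dB m : ℕ} {J OA OB : Type*} [Fintype OA] [Fintype OB]
    {ρ' : Matrix (Fin dA × (Fin m → Fin dB)) (Fin dA × (Fin m → Fin dB)) ℂ}
    (hρ' : IsDensityMatrix ρ') {E : J → OA → Matrix (Fin dA) (Fin dA) ℂ} (hE : ∀ j, IsPOVM (E j))
    {F : Fin m → OB → Matrix (Fin dB) (Fin dB) ℂ} (hF : ∀ i, IsPOVM (F i)) :
    ∃ (p : (Fin m → OB) → ℝ) (PA : J → OA → (Fin m → OB) → ℝ)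
      (PB : Fin m → OB → (Fin m → OB) → ℝ),
      IsLHVModel (fun j i a b => (reducedAt ρ' i * (E j a ⊗ₖ F i b)).trace) p PA PB := by
  let _ : DecidableEq OB := Classical.decEq OB
  obtain ⟨hρ'_psd, hρ'_trace⟩ := hρ'
  let T : Matrix (Fin dA) (Fin dA) ℂ → (Fin m → OB) → ℂ :=
    fun A bv => (ρ' * (A ⊗ₖ piKronecker fun i => F i (bv i))).trace
  have hT_nonneg {A : Matrix (Fin dA) (Fin dA) ℂ} (hA : A.PosSemidef) (bv) : 0 ≤ T A bv :=
    hρ'_psd.trace_mul_nonneg (hA.kronecker (PosSemidef.piKronecker fun i => (hF i).1 (bv i)))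
  have hT_re {A : Matrix (Fin dA) (Fin dA) ℂ} (hA : A.PosSemidef) (bv) :
      ((T A bv).re : ℂ) = T A bv :=
    (Complex.eq_re_of_ofReal_le (by rw [Complex.ofReal_zero]; exact hT_nonneg hA bv)).symm
  have hT_sum (A : Matrix (Fin dA) (Fin dA) ℂ) (s : Finset (Fin m → OB)) :
      ∑ bv ∈ s, T A bv = (ρ' * (A ⊗ₖ ∑ bv ∈ s, piKronecker fun i => F i (bv i))).trace := by
    simp only [T, kronecker_sum, mul_sum, trace_sum]
  have hE_sum (j bv) : ∑ a, T (E j a) bv = T 1 bv := by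
    simp only [T, ← trace_sum, ← mul_sum, ← sum_kronecker, (hE j).2]
  have hF_sum : (fun k => ∑ c, F k c) = 1 := funext fun k => (hF k).2
  have hp_sum : ∑ bv, (T 1 bv).re = 1 := by
    rw [← Complex.re_sum, hT_sum, ← piKronecker_sum, hF_sum, piKronecker_one, one_kronecker_one,
      Matrix.mul_one, hρ'_trace, Complex.one_re]
  have hP (j i a b) : (reducedAt ρ' i * (E j a ⊗ₖ F i b)).trace =
      ((∑ bv with bv i = b, (T (E j a) bv).re : ℝ) : ℂ) := by
    push_cast
    rw [sum_congr rfl fun bv _ => hT_re ((hE j).1 a) bv, hT_sum, sum_filter_piKronecker, hF_sum,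
      trace_reducedAt_mul_kronecker]
  obtain ⟨PA, hmodel⟩ := exists_isLHVModel_of_deterministic
    (fun j a bv => (Complex.nonneg_iff.mp (hT_nonneg ((hE j).1 a) bv)).1)
    (fun bv => (Complex.nonneg_iff.mp (hT_nonneg PosSemidef.one bv)).1) hp_sum
    (fun j bv => by rw [← Complex.re_sum, hE_sum]) (fun i bv => bv i) hP
  exact ⟨_, PA, _, hmodel⟩

theorem no_symmetric_extension_of_no_lhv_general
    {dA dB m : ℕ} {J OA OB : Type} [Fintype OA] [Fintype OB]
    (ρ : Matrix (Fin dA × Fin dB) (Fin dA × Fin dB) ℂ)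
    (E : J → OA → Matrix (Fin dA) (Fin dA) ℂ) (hE : ∀ j, IsPOVM (E j))
    (F : Fin m → OB → Matrix (Fin dB) (Fin dB) ℂ) (hF : ∀ i, IsPOVM (F i))
    (hNoLHV : ¬ ∃ (N : ℕ) (p : Fin N → ℝ) (PA : J → OA → Fin N → ℝ)
        (PB : Fin m → OB → Fin N → ℝ),
      (∀ l, 0 ≤ p l) ∧ (∑ l, p l = 1) ∧
      (∀ j a l, 0 ≤ PA j a l ∧ PA j a l ≤ 1) ∧
      (∀ j l, ∑ a, PA j a l = 1) ∧
      (∀ i b l, 0 ≤ PB i b l ∧ PB i b l ≤ 1) ∧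
      (∀ i l, ∑ b, PB i b l = 1) ∧
      (∀ (j : J) (i : Fin m) (a : OA) (b : OB),
        (ρ * (E j a ⊗ₖ F i b)).trace = ((∑ l, p l * PA j a l * PB i b l : ℝ) : ℂ))) :
    ¬ ∃ ρ' : Matrix (Fin dA × (Fin m → Fin dB)) (Fin dA × (Fin m → Fin dB)) ℂ,
        IsDensityMatrix ρ' ∧ ∀ i : Fin m, reducedAt ρ' i = ρ := by
  rintro ⟨ρ', hρ', hred⟩
  obtain ⟨p, PA, PB, hmodel⟩ := exists_isLHVModel_reducedAt hρ' hE hF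
  simp only [hred] at hmodel
  exact hNoLHV ⟨_, _, _, _, hmodel.comp_equiv (Fintype.equivFin _).symm⟩

/-- **Contrapositive of Theorem 1.** If the joint statistics of some finite family of POVMs on
Alice's side and `m` POVMs on Bob's side measured on `ρ` admit no local hidden variable model
(i.e. `ρ` violates a Bell inequality with `m` settings on Bob's side), then `ρ` has no symmetric
extension to `m` copies of `B`. -/
theorem no_symmetric_extension_of_no_lhv
    {dA dB m : ℕ} {J OA OB : Type} [Fintype J] [Fintype OA] [Fintype OB]
    (ρ : Matrix (Fin dA × Fin dB) (Fin dA × Fin dB) ℂ) (hρ : IsDensityMatrix ρ)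
    (E : J → OA → Matrix (Fin dA) (Fin dA) ℂ) (hE : ∀ j, IsPOVM (E j))
    (F : Fin m → OB → Matrix (Fin dB) (Fin dB) ℂ) (hF : ∀ i, IsPOVM (F i))
    (hNoLHV : ¬ ∃ (N : ℕ) (p : Fin N → ℝ) (PA : J → OA → Fin N → ℝ)
        (PB : Fin m → OB → Fin N → ℝ),
      (∀ l, 0 ≤ p l) ∧ (∑ l, p l = 1) ∧
      (∀ j a l, 0 ≤ PA j a l ∧ PA j a l ≤ 1) ∧
      (∀ j l, ∑ a, PA j a l = 1) ∧
      (∀ i b l, 0 ≤ PB i b l ∧ PB i b l ≤ 1) ∧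
      (∀ i l, ∑ b, PB i b l = 1) ∧
      (∀ (j : J) (i : Fin m) (a : OA) (b : OB),
        (ρ * (E j a ⊗ₖ F i b)).trace = ((∑ l, p l * PA j a l * PB i b l : ℝ) : ℂ))) :
    ¬ ∃ ρ' : Matrix (Fin dA × (Fin m → Fin dB)) (Fin dA × (Fin m → Fin dB)) ℂ,
        IsDensityMatrix ρ' ∧ ∀ i : Fin m, reducedAt ρ' i = ρ :=
  no_symmetric_extension_of_no_lhv_general ρ E hE F hF hNoLHV
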